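/- Consider the six linear functionals on ℚ^14 given by E₁ = a₀+a₂+a₄−c₀−c₂, E₂ = a₁+a₃+a₄−c₁−c₃, E₃ = a₀+a₃+a₄−b₀−b₃−b₄, E₄ = a₁+a₂+a₄−b₁−b₂−b₄, E₅ = b₀+b₂+b₄−c₀−c₃, E₆ = b₁+b₃+b₄−c₁−c₂, in the coordinates (a₀,…,a₄,b₀,…,b₄,c₀,…,c₃). Then E₁+E₂−E₃−E₄−E₅−E₆ = 0, the functionals E₁,…,E₅ are linearly independent, and hence the span of {E₁,…,E₆} has dimension exactly 5. -/
import Mathlib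


/-! The six compatibility functionals of the wallpaper group `p4mm` on `ℚ¹⁴`,
in the coordinates `(a₀,…,a₄,b₀,…,b₄,c₀,…,c₃)` given by
`v 0,…,v 4, v 5,…,v 9, v 10,…,v 13`. -/

/-- The `i`-th coordinate functional on `ℚ¹⁴`. -/
def P (i : Fin 14) : (Fin 14 → ℚ) →ₗ[ℚ] ℚ := LinearMap.proj i

/-- `E₁ = a₀ + a₂ + a₄ − c₀ − c₂`. -/
def E1 : (Fin 14 → ℚ) →ₗ[ℚ] ℚ :=
  P 0 + P 2 + P 4
    - P 10 - P 12

/-- `E₂ = a₁ + a₃ + a₄ − c₁ − c₃`. -/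
def E2 : (Fin 14 → ℚ) →ₗ[ℚ] ℚ :=
  P 1 + P 3 + P 4
    - P 11 - P 13

/-- `E₃ = a₀ + a₃ + a₄ − b₀ − b₃ − b₄`. -/
def E3 : (Fin 14 → ℚ) →ₗ[ℚ] ℚ :=
  P 0 + P 3 + P 4
    - P 5 - P 8 - P 9

/-- `E₄ = a₁ + a₂ + a₄ − b₁ − b₂ − b₄`. -/
def E4 : (Fin 14 → ℚ) →ₗ[ℚ] ℚ :=
  P 1 + P 2 + P 4
    - P 6 - P 7 - P 9

/-- `E₅ = b₀ + b₂ + b₄ − c₀ − c₃`. -/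
def E5 : (Fin 14 → ℚ) →ₗ[ℚ] ℚ :=
  P 5 + P 7 + P 9
    - P 10 - P 13

/-- `E₆ = b₁ + b₃ + b₄ − c₁ − c₂`. -/
def E6 : (Fin 14 → ℚ) →ₗ[ℚ] ℚ :=
  P 6 + P 8 + P 9
    - P 11 - P 12

lemma relation : E1 + E2 - E3 - E4 - E5 - E6 = 0 := by
  ext v
  simp [E1, E2, E3, E4, E5, E6, P]
  ring

lemma indep : LinearIndependent ℚ ![E1, E2, E3, E4, E5] := by
  rw [Fintype.linearIndependent_iff]
  intro g hg
  have h : ∀ j : Fin 14, (∑ i, g i • ![E1, E2, E3, E4, E5] i) (Pi.single j 1) = 0 := by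
    intro j; rw [hg]; rfl
  have h12 := h 12
  have h6 := h 6
  have h1 := h 1
  have h10 := h 10
  have h0 := h 0
  simp [Fin.sum_univ_five, E1, E2, E3, E4, E5, P, Pi.single_apply] at h12 h6 h1 h10 h0
  intro i
  fin_cases i <;> simp <;> linarith

/-- `E₁+E₂−E₃−E₄−E₅−E₆ = 0`, the functionals `E₁,…,E₅` are linearly
independent, and the span of `{E₁,…,E₆}` has dimension exactly 5. -/
theorem p4mm_relations_rank_five :
    E1 + E2 - E3 - E4 - E5 - E6 = 0 ∧
    LinearIndependent ℚ ![E1, E2, E3, E4, E5] ∧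
    Module.finrank ℚ
      (Submodule.span ℚ ({E1, E2, E3, E4, E5, E6} :
        Set ((Fin 14 → ℚ) →ₗ[ℚ] ℚ))) = 5 := by
  refine ⟨relation, indep, ?_⟩
  have hset : ({E1, E2, E3, E4, E5, E6} : Set ((Fin 14 → ℚ) →ₗ[ℚ] ℚ))
      = insert E6 {E1, E2, E3, E4, E5} := by
    ext x; simp; tauto
  have hE6 : E6 ∈ Submodule.span ℚ ({E1, E2, E3, E4, E5} :
      Set ((Fin 14 → ℚ) →ₗ[ℚ] ℚ)) := by
    have : E6 = E1 + E2 - E3 - E4 - E5 := by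
      have := relation
      linear_combination (norm := module) -this
    rw [this]
    refine Submodule.sub_mem _ (Submodule.sub_mem _ (Submodule.sub_mem _
      (Submodule.add_mem _ ?_ ?_) ?_) ?_) ?_ <;>
      apply Submodule.subset_span <;> simp
  rw [hset, Submodule.span_insert_eq_span hE6]
  have hrange : ({E1, E2, E3, E4, E5} : Set ((Fin 14 → ℚ) →ₗ[ℚ] ℚ))
      = Set.range ![E1, E2, E3, E4, E5] := by
    simp [Matrix.range_cons, Matrix.range_empty]
    ext x; simp; tauto
  rw [hrange, finrank_span_eq_card indep]
  simp
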